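/- arXiv:2107.00247 — 3 statements merged into one kernel-verified Lean document; each statement's English description precedes it below -/
import Mathlib

section
/- Let Σ be a symmetric positive definite d×d real matrix, μ ∈ ℝ^d, ε ≥ 0, and z* a minimizer over {z : ‖z‖_∞ ≤ 1} of z ↦ ⟨μ - εz, Σ^{-1}(μ - εz)⟩, with μ - εz* ≠ 0. Define c = 2⟨μ, Σ^{-1}(μ - εz*)⟩ and d = 2·√⟨μ - εz*, Σ^{-1}(μ - εz*)⟩. Then c/d² ≥ 1/2, with equality when ε = 0. -/
/-!
Write `v = μ - ε z*` and `Q x = ⟪x, Σ⁻¹ x⟫`. Since `c = 2 Q v + 2 ε ⟪z*, Σ⁻¹ v⟫` and `d² = 4 Q v`,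
the claim amounts to `ε ⟪z*, Σ⁻¹ v⟫ ≥ 0`. This is the first-order optimality condition of `z*`
along the segment towards `0`, which stays in the ℓ∞ unit ball: `(1 - t) z*` is feasible and
`Q (v + t ε z*) = Q v + 2 t ε ⟪z*, Σ⁻¹ v⟫ + O(t²)`.
-/

open Matrix

lemma nonneg_of_forall_two_mul_add_sq_mul_nonneg {a b : ℝ}
    (h : ∀ t : ℝ, 0 < t → t ≤ 1 → 0 ≤ 2 * t * a + t ^ 2 * b) : 0 ≤ a := by
  by_contra! ha
  set t := min 1 (-a / (|b| + 1))
  have ht₀ : 0 < t := lt_min one_pos (div_pos (by linarith) (by positivity))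
  have htb : t * (|b| + 1) ≤ -a := (le_div_iff₀ (by positivity)).1 (min_le_right _ _)
  have := h t ht₀ (min_le_left _ _)
  nlinarith [mul_le_mul_of_nonneg_left htb ht₀.le,
    mul_le_mul_of_nonneg_left (le_abs_self b) (sq_nonneg t)]

namespace Matrix.IsSymm

variable {n : Type*} [Fintype n] {A : Matrix n n ℝ}

lemma dotProduct_mulVec_comm (hA : A.IsSymm) (v w : n → ℝ) : v ⬝ᵥ A *ᵥ w = w ⬝ᵥ A *ᵥ v := by
  rw [dotProduct_mulVec, ← mulVec_transpose, hA.eq, dotProduct_comm]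

lemma dotProduct_mulVec_add_smul (hA : A.IsSymm) (v w : n → ℝ) (t : ℝ) :
    (v + t • w) ⬝ᵥ A *ᵥ (v + t • w)
      = v ⬝ᵥ A *ᵥ v + 2 * t * (w ⬝ᵥ A *ᵥ v) + t ^ 2 * (w ⬝ᵥ A *ᵥ w) := by
  simp only [mulVec_add, mulVec_smul, dotProduct_add, add_dotProduct, dotProduct_smul,
    smul_dotProduct, hA.dotProduct_mulVec_comm v w, smul_eq_mul]
  ring

lemma mul_dotProduct_mulVec_nonneg_of_isMinOn (hA : A.IsSymm) {K : Set (n → ℝ)}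
    (hK : StarConvex ℝ 0 K) (μ : n → ℝ) (ε : ℝ) {z : n → ℝ} (hz : z ∈ K)
    (hmin : IsMinOn (fun z => (μ - ε • z) ⬝ᵥ A *ᵥ (μ - ε • z)) K z) :
    0 ≤ ε * (z ⬝ᵥ A *ᵥ (μ - ε • z)) := by
  set v := μ - ε • z
  refine nonneg_of_forall_two_mul_add_sq_mul_nonneg (b := ε ^ 2 * (z ⬝ᵥ A *ᵥ z))
    fun t ht₀ ht₁ => ?_
  have hmove : μ - ε • ((1 - t) • z) = v + (t * ε) • z := by
    simp only [v]
    module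
  have hle : v ⬝ᵥ A *ᵥ v ≤ (μ - ε • ((1 - t) • z)) ⬝ᵥ A *ᵥ (μ - ε • ((1 - t) • z)) :=
    hmin (hK.smul_mem hz (t := 1 - t) (by linarith) (by linarith))
  rw [hmove, hA.dotProduct_mulVec_add_smul] at hle
  linarith

end Matrix.IsSymm

lemma starConvex_zero_setOf_forall_abs_le_one (ι : Type*) :
    StarConvex ℝ 0 {z : ι → ℝ | ∀ i, |z i| ≤ 1} := by
  refine starConvex_zero_iff.2 fun z hz t ht₀ ht₁ i => ?_
  rw [Pi.smul_apply, smul_eq_mul, abs_mul, abs_of_nonneg ht₀]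
  exact mul_le_one₀ ht₁ (abs_nonneg _) (hz i)

theorem c_over_d_sq_ge_half_general (dd : ℕ) (S : Matrix (Fin dd) (Fin dd) ℝ) (hS : S.PosDef)
    (μ : Fin dd → ℝ) (ε : ℝ) (z : Fin dd → ℝ)
    (hz : ∀ i, |z i| ≤ 1)
    (hmin : ∀ z' : Fin dd → ℝ, (∀ i, |z' i| ≤ 1) →
        ∑ i, (μ i - ε * z i) * S⁻¹.mulVec (fun j => μ j - ε * z j) i
          ≤ ∑ i, (μ i - ε * z' i) * S⁻¹.mulVec (fun j => μ j - ε * z' j) i)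
    (hne : (fun j => μ j - ε * z j) ≠ 0)
    (c d : ℝ)
    (hc : c = 2 * ∑ i, μ i * S⁻¹.mulVec (fun j => μ j - ε * z j) i)
    (hd : d = 2 * Real.sqrt (∑ i, (μ i - ε * z i) * S⁻¹.mulVec (fun j => μ j - ε * z j) i)) :
    c / d ^ 2 ≥ 1 / 2 ∧ (ε = 0 → c / d ^ 2 = 1 / 2) := by
  set v := μ - ε • z
  have hA : (S⁻¹).IsSymm := isHermitian_iff_isSymm.1 hS.inv.isHermitian
  have hQ : 0 < v ⬝ᵥ S⁻¹ *ᵥ v := by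
    have h := hS.inv.dotProduct_mulVec_pos hne
    rwa [star_trivial] at h
  have hopt : 0 ≤ ε * (z ⬝ᵥ S⁻¹ *ᵥ v) :=
    hA.mul_dotProduct_mulVec_nonneg_of_isMinOn (starConvex_zero_setOf_forall_abs_le_one _) μ ε
      hz hmin
  have hc' : c = 2 * (v ⬝ᵥ S⁻¹ *ᵥ v) + 2 * (ε * (z ⬝ᵥ S⁻¹ *ᵥ v)) := by
    have hμ : μ = v + ε • z := by simp [v]
    change c = 2 * (μ ⬝ᵥ S⁻¹ *ᵥ v) at hc
    rw [hc, hμ, add_dotProduct, smul_dotProduct, smul_eq_mul]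
    ring
  have hd' : d ^ 2 = 4 * (v ⬝ᵥ S⁻¹ *ᵥ v) := by
    change d = 2 * √(v ⬝ᵥ S⁻¹ *ᵥ v) at hd
    rw [hd, mul_pow, Real.sq_sqrt hQ.le]
    norm_num
  rw [hc', hd']
  refine ⟨?_, fun hε => ?_⟩
  · rw [ge_iff_le, le_div_iff₀ (by positivity)]
    linarith
  · rw [hε, zero_mul]
    field_simp
    ring

theorem c_over_d_sq_ge_half (dd : ℕ) (S : Matrix (Fin dd) (Fin dd) ℝ) (hS : S.PosDef)
    (μ : Fin dd → ℝ) (ε : ℝ) (hε : 0 ≤ ε) (z : Fin dd → ℝ)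
    (hz : ∀ i, |z i| ≤ 1)
    (hmin : ∀ z' : Fin dd → ℝ, (∀ i, |z' i| ≤ 1) →
        ∑ i, (μ i - ε * z i) * S⁻¹.mulVec (fun j => μ j - ε * z j) i
          ≤ ∑ i, (μ i - ε * z' i) * S⁻¹.mulVec (fun j => μ j - ε * z' j) i)
    (hne : (fun j => μ j - ε * z j) ≠ 0)
    (c d : ℝ)
    (hc : c = 2 * ∑ i, μ i * S⁻¹.mulVec (fun j => μ j - ε * z j) i)
    (hd : d = 2 * Real.sqrt (∑ i, (μ i - ε * z i) * S⁻¹.mulVec (fun j => μ j - ε * z j) i)) :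
    c / d ^ 2 ≥ 1 / 2 ∧ (ε = 0 → c / d ^ 2 = 1 / 2) :=
  c_over_d_sq_ge_half_general dd S hS μ ε z hz hmin hne c d hc hd
end

section
/- Define F(π) = π·Φ((-c - ln(π/(1-π)))/d) for π ∈ (0,1) with c ∈ ℝ, d > 0, where Φ is the standard Gaussian CDF. Then lim_{π→1⁻} F'(π) = 0 and lim_{π→1⁻} d/dπ[F(1-π)] = -1; consequently the function R(π) = F(π) + F(1-π) satisfies lim_{π→1⁻} R'(π) = -1, so R is strictly decreasing on some interval (π*, 1). -/
noncomputable def Phi (x : ℝ) : ℝ :=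
  ∫ t in Set.Iic x, (Real.sqrt (2 * Real.pi))⁻¹ * Real.exp (-t ^ 2 / 2)

/-!
With the log-odds `u = log (π / (1 - π))` one has `1 / (1 - π) = 1 + eᵘ`, so
`F'(π) = Φ(z) - (1 + eᵘ) φ(z) / d` with `z = (-c - u) / d`; since the log-odds of `1 - π` is `-u`,
`d/dπ F(1 - π)` is minus the same expression at `-u`. As `π → 1⁻`, `u → ∞`. For `u → ∞`,
`z → -∞`: `Φ(z) → 0`, and the Gaussian `φ(z)` beats `eᵘ = e⁻ᶜ e^(-d z)`, so `F' → 0`. For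
`-u → -∞`, `z → ∞`: `Φ(z) → 1` and `φ(z) → 0`, so `d/dπ F(1 - π) → -1`. A negative limit of `R'`
at `1⁻` makes `R` strictly decreasing just left of `1`.
-/

open Real Filter MeasureTheory Set Topology ProbabilityTheory

theorem hasDerivAt_integral_Iic {E : Type*} [NormedAddCommGroup E] [NormedSpace ℝ E]
    [CompleteSpace E] {f : ℝ → E} (hf : Integrable f) {x : ℝ} (hx : ContinuousAt f x) :
    HasDerivAt (fun y => ∫ t in Iic y, f t) (f x) x := by
  have hsplit : (fun y => ∫ t in Iic y, f t) =
      fun y => (∫ t in Iic 0, f t) + ∫ t in 0..y, f t := by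
    ext y
    rw [← intervalIntegral.integral_Iic_sub_Iic hf.integrableOn hf.integrableOn]
    abel
  rw [hsplit]
  exact (intervalIntegral.integral_hasDerivAt_right hf.intervalIntegrable
    hf.aestronglyMeasurable.stronglyMeasurableAtFilter hx).const_add _

theorem gaussianPDFReal_zero_one :
    gaussianPDFReal 0 1 = fun z => (√(2 * π))⁻¹ * rexp (-z ^ 2 / 2) := by
  ext z
  simp [gaussianPDFReal]

theorem Phi_eq_integral_gaussianPDFReal :
    Phi = fun x => ∫ t in Iic x, gaussianPDFReal 0 1 t := by
  rw [gaussianPDFReal_zero_one]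
  rfl

theorem Phi_eq_cdf_gaussianReal : Phi = cdf (gaussianReal 0 1) := by
  ext x
  rw [cdf_eq_real, measureReal_def, gaussianReal_apply_eq_integral _ one_ne_zero,
    ENNReal.toReal_ofReal (setIntegral_nonneg measurableSet_Iic
      fun t _ => gaussianPDFReal_nonneg 0 1 t), Phi_eq_integral_gaussianPDFReal]

theorem tendsto_Phi_atBot : Tendsto Phi atBot (𝓝 0) :=
  Phi_eq_cdf_gaussianReal ▸ tendsto_cdf_atBot _

theorem tendsto_Phi_atTop : Tendsto Phi atTop (𝓝 1) :=
  Phi_eq_cdf_gaussianReal ▸ tendsto_cdf_atTop _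

theorem hasDerivAt_Phi (x : ℝ) : HasDerivAt Phi (gaussianPDFReal 0 1 x) x := by
  rw [Phi_eq_integral_gaussianPDFReal]
  refine hasDerivAt_integral_Iic (integrable_gaussianPDFReal 0 1) ?_
  rw [gaussianPDFReal_zero_one]
  fun_prop

theorem tendsto_exp_const_mul_mul_gaussianPDFReal_atBot (a : ℝ) :
    Tendsto (fun z => rexp (a * z) * gaussianPDFReal 0 1 z) atBot (𝓝 0) := by
  have hquad : Tendsto (fun z : ℝ => z * (a + -(z / 2))) atBot atBot :=
    tendsto_id.atBot_mul_atTop₀ (tendsto_atTop_add_const_left _ a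
      (tendsto_neg_atBot_atTop.comp (tendsto_id.atBot_div_const two_pos)))
  have h := (tendsto_exp_atBot.comp hquad).const_mul (√(2 * π))⁻¹
  rw [mul_zero] at h
  refine h.congr fun z => ?_
  rw [gaussianPDFReal_zero_one, mul_left_comm, ← exp_add]
  simp only [Function.comp_apply]
  ring_nf

theorem tendsto_gaussianPDFReal_atBot : Tendsto (gaussianPDFReal 0 1) atBot (𝓝 0) := by
  simpa using tendsto_exp_const_mul_mul_gaussianPDFReal_atBot 0

theorem tendsto_gaussianPDFReal_atTop : Tendsto (gaussianPDFReal 0 1) atTop (𝓝 0) := by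
  refine (tendsto_gaussianPDFReal_atBot.comp tendsto_neg_atTop_atBot).congr fun z => ?_
  simp [gaussianPDFReal_zero_one]

noncomputable def logit (p : ℝ) : ℝ := log (p / (1 - p))

theorem logit_one_sub (p : ℝ) : logit (1 - p) = -logit p := by
  rw [logit, logit, sub_sub_cancel, ← log_inv, inv_div]

theorem exp_logit {p : ℝ} (h0 : 0 < p) (h1 : p < 1) : rexp (logit p) = p / (1 - p) :=
  exp_log (div_pos h0 (sub_pos.2 h1))

theorem hasDerivAt_logit {p : ℝ} (h0 : 0 < p) (h1 : p < 1) :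
    HasDerivAt logit (p * (1 - p))⁻¹ p := by
  have h1' : 1 - p ≠ 0 := (sub_pos.2 h1).ne'
  convert ((hasDerivAt_id' p).div ((hasDerivAt_id' p).const_sub 1) h1').log
    (div_pos h0 (sub_pos.2 h1)).ne' using 1
  · rfl
  · simp only [Pi.div_apply]
    field_simp
    ring

theorem tendsto_logit_nhdsLT_one : Tendsto logit (𝓝[<] 1) atTop := by
  have hsub : Tendsto (fun p : ℝ => 1 - p) (𝓝[<] 1) (𝓝[>] 0) := by
    refine tendsto_nhdsWithin_of_tendsto_nhds_of_eventually_within _ ?_ ?_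
    · exact ((continuous_const.sub continuous_id).tendsto' (1 : ℝ) 0 (sub_self 1)).mono_left
        nhdsWithin_le_nhds
    · filter_upwards [self_mem_nhdsWithin] with p hp
      exact sub_pos.2 (mem_Iio.1 hp)
  have hodds : Tendsto (fun p : ℝ => p * (1 - p)⁻¹) (𝓝[<] 1) atTop :=
    tendsto_nhdsWithin_of_tendsto_nhds tendsto_id |>.pos_mul_atTop one_pos
      (tendsto_inv_nhdsGT_zero.comp hsub)
  exact tendsto_log_atTop.comp hodds

/-- The paper's `F`. -/
noncomputable def classRisk (c d p : ℝ) : ℝ := p * Phi ((-c - logit p) / d)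

/-- `F'(π)` as a function of the log-odds `u = logit π`. -/
noncomputable def classRiskSlope (c d u : ℝ) : ℝ :=
  Phi ((-c - u) / d) - (1 + rexp u) / d * gaussianPDFReal 0 1 ((-c - u) / d)

theorem hasDerivAt_classRisk {c d p : ℝ} (hd : d ≠ 0) (h0 : 0 < p) (h1 : p < 1) :
    HasDerivAt (classRisk c d) (classRiskSlope c d (logit p)) p := by
  have hz := ((hasDerivAt_logit h0 h1).const_sub (-c)).div_const d
  refine ((hasDerivAt_id' p).mul ((hasDerivAt_Phi _).comp p hz)).congr_deriv ?_
  have h1' : 1 - p ≠ 0 := (sub_pos.2 h1).ne'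
  rw [classRiskSlope, exp_logit h0 h1, Function.comp_apply]
  field_simp
  ring

theorem tendsto_classRiskSlope_atTop {c d : ℝ} (hd : 0 < d) :
    Tendsto (classRiskSlope c d) atTop (𝓝 0) := by
  have hz : Tendsto (fun u => (-c - u) / d) atTop atBot :=
    (tendsto_atBot_add_const_left _ (-c) tendsto_neg_atTop_atBot).atBot_div_const hd
  have hexp : Tendsto (fun u => rexp u * gaussianPDFReal 0 1 ((-c - u) / d)) atTop (𝓝 0) := by
    have h := ((tendsto_exp_const_mul_mul_gaussianPDFReal_atBot (-d)).comp hz).const_mul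
      (rexp (-c))
    rw [mul_zero] at h
    refine h.congr fun u => ?_
    rw [Function.comp_apply, ← mul_assoc, ← exp_add]
    congr 2
    field_simp
    ring
  have h := (tendsto_Phi_atBot.comp hz).sub
    (((tendsto_gaussianPDFReal_atBot.comp hz).add hexp).div_const d)
  rw [add_zero, zero_div, sub_zero] at h
  refine h.congr fun u => ?_
  simp only [classRiskSlope, Function.comp_apply]
  ring

theorem tendsto_classRiskSlope_atBot {c d : ℝ} (hd : 0 < d) :
    Tendsto (classRiskSlope c d) atBot (𝓝 1) := by
  have hz : Tendsto (fun u => (-c - u) / d) atBot atTop :=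
    (tendsto_atTop_add_const_left _ (-c) tendsto_neg_atBot_atTop).atTop_div_const hd
  have h := (tendsto_Phi_atTop.comp hz).sub
    ((((tendsto_const_nhds (x := (1 : ℝ))).add tendsto_exp_atBot).div_const d).mul
      (tendsto_gaussianPDFReal_atTop.comp hz))
  rw [mul_zero, sub_zero] at h
  exact h

theorem tendsto_deriv_of_eventually_hasDerivAt {𝕜 F : Type*} [NontriviallyNormedField 𝕜]
    [NormedAddCommGroup F] [NormedSpace 𝕜 F] {f f' : 𝕜 → F} {l : Filter 𝕜} {L : F}
    (hf : ∀ᶠ x in l, HasDerivAt f (f' x) x) (h : Tendsto f' l (𝓝 L)) :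
    Tendsto (deriv f) l (𝓝 L) :=
  h.congr' (hf.mono fun _ hx => hx.deriv.symm)

theorem exists_strictAntiOn_Ioo_of_tendsto_deriv_neg {f : ℝ → ℝ} {a l L : ℝ} (hl : l < a)
    (hf : ∀ᶠ x in 𝓝[<] a, DifferentiableAt ℝ f x) (hL : L < 0)
    (h : Tendsto (deriv f) (𝓝[<] a) (𝓝 L)) :
    ∃ b ∈ Ioo l a, StrictAntiOn f (Ioo b a) := by
  obtain ⟨b, hb, hsub⟩ := (mem_nhdsLT_iff_exists_mem_Ico_Ioo_subset
    (add_div_two_lt_right.2 hl)).1 (hf.and (h.eventually_lt_const hL))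
  refine ⟨b, ⟨(left_lt_add_div_two.2 hl).trans_le hb.1, hb.2⟩, ?_⟩
  refine strictAntiOn_of_deriv_neg (convex_Ioo b a) ?_ fun x hx => ?_
  · exact fun x hx => (hsub hx).1.continuousAt.continuousWithinAt
  · rw [interior_Ioo] at hx
    exact (hsub hx).2

theorem risk_eventually_decreasing (c d : ℝ) (hd : 0 < d)
    (F : ℝ → ℝ) (hF : F = fun p : ℝ => p * Phi ((-c - Real.log (p / (1 - p))) / d)) :
    Filter.Tendsto (deriv F) (nhdsWithin 1 (Set.Iio 1)) (nhds 0) ∧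
    Filter.Tendsto (deriv (fun p : ℝ => F (1 - p))) (nhdsWithin 1 (Set.Iio 1)) (nhds (-1)) ∧
    Filter.Tendsto (deriv (fun p : ℝ => F p + F (1 - p)))
      (nhdsWithin 1 (Set.Iio 1)) (nhds (-1)) ∧
    ∃ πs ∈ Set.Ioo (0 : ℝ) 1,
      StrictAntiOn (fun p : ℝ => F p + F (1 - p)) (Set.Ioo πs 1) := by
  obtain rfl : F = classRisk c d := hF
  have hmem : Ioo (0 : ℝ) 1 ∈ 𝓝[<] 1 := Ioo_mem_nhdsLT one_pos
  have hR : ∀ p ∈ Ioo (0 : ℝ) 1, HasDerivAt (classRisk c d) (classRiskSlope c d (logit p)) p :=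
    fun p hp => hasDerivAt_classRisk hd.ne' hp.1 hp.2
  have hRrefl : ∀ p ∈ Ioo (0 : ℝ) 1, HasDerivAt (fun p => classRisk c d (1 - p))
      (-classRiskSlope c d (-logit p)) p := fun p hp => by
    rw [← logit_one_sub]
    exact (hR (1 - p) ⟨sub_pos.2 hp.2, sub_lt_self 1 hp.1⟩).comp_const_sub 1 p
  have hRsum : ∀ᶠ p in 𝓝[<] 1, HasDerivAt (fun p => classRisk c d p + classRisk c d (1 - p))
      (classRiskSlope c d (logit p) + -classRiskSlope c d (-logit p)) p :=
    eventually_of_mem hmem fun p hp => (hR p hp).add (hRrefl p hp)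
  have hlim : Tendsto (fun p => classRiskSlope c d (logit p)) (𝓝[<] 1) (𝓝 0) :=
    (tendsto_classRiskSlope_atTop hd).comp tendsto_logit_nhdsLT_one
  have hlimRefl : Tendsto (fun p => -classRiskSlope c d (-logit p)) (𝓝[<] 1) (𝓝 (-1)) :=
    ((tendsto_classRiskSlope_atBot hd).comp
      (tendsto_neg_atTop_atBot.comp tendsto_logit_nhdsLT_one)).neg
  have hsum := tendsto_deriv_of_eventually_hasDerivAt hRsum
    (zero_add (-1 : ℝ) ▸ hlim.add hlimRefl)
  refine ⟨tendsto_deriv_of_eventually_hasDerivAt (eventually_of_mem hmem hR) hlim,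
    tendsto_deriv_of_eventually_hasDerivAt (eventually_of_mem hmem hRrefl) hlimRefl, hsum,
    exists_strictAntiOn_Ioo_of_tendsto_deriv_neg one_pos
      (hRsum.mono fun _ h => h.differentiableAt) (by norm_num) hsum⟩
end

section
/- Let Σ be a symmetric positive definite d×d matrix and μ ∈ ℝ^d with m := √⟨μ, Σ^{-1}μ⟩ > 0. Let C = C_{Σ,μ} := ⟨sign(Σ^{-1}μ), Σ^{-1}sign(Σ^{-1}μ)⟩ - ‖Σ^{-1}μ‖_1²/m². Suppose 0 ≤ ε ≤ min(m²/(2‖Σ^{-1}μ‖_1), m/(2√C)) (with the second constraint vacuous if C = 0). Let z* minimize ‖μ - εz‖_{Σ^{-1}} over ‖z‖_∞ ≤ 1. Then the gap G := Φ((-m² + ε⟨z*, Σ^{-1}μ⟩)/‖μ - εz*‖_{Σ^{-1}}) - Φ(-m) satisfies G ≤ Φ(-m + 2Cε²/m) - Φ(-m) ≤ (2e^{-m²/8}·C·ε²)/(√(2π)·m). -/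
open MeasureTheory Real Set Matrix

lemma integrable_gaussian_density :
    Integrable (fun t : ℝ => (√(2 * π))⁻¹ * exp (-t ^ 2 / 2)) := by
  have h : ∀ t : ℝ, -t ^ 2 / 2 = -(1 / 2) * t ^ 2 := fun t => by ring
  simp only [h]
  exact (integrable_exp_neg_mul_sq (by norm_num)).const_mul _

lemma Phi_sub_Phi {a b : ℝ} (hab : a ≤ b) :
    Phi b - Phi a = ∫ t in Ioc a b, (√(2 * π))⁻¹ * exp (-t ^ 2 / 2) := by
  rw [Phi, Phi, intervalIntegral.integral_Iic_sub_Iic integrable_gaussian_density.integrableOn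
    integrable_gaussian_density.integrableOn, intervalIntegral.integral_of_le hab]

lemma Phi_monotone : Monotone Phi := fun a b hab => by
  have h := Phi_sub_Phi hab
  have : 0 ≤ ∫ t in Ioc a b, (√(2 * π))⁻¹ * exp (-t ^ 2 / 2) :=
    setIntegral_nonneg measurableSet_Ioc fun t _ => by positivity
  linarith

lemma Phi_sub_Phi_le_of_exp_le {a b K : ℝ} (hab : a ≤ b)
    (hK : ∀ t ∈ Icc a b, exp (-t ^ 2 / 2) ≤ K) :
    Phi b - Phi a ≤ (b - a) * ((√(2 * π))⁻¹ * K) := by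
  rw [Phi_sub_Phi hab]
  calc ∫ t in Ioc a b, (√(2 * π))⁻¹ * exp (-t ^ 2 / 2)
      ≤ ∫ _ in Ioc a b, (√(2 * π))⁻¹ * K :=
        setIntegral_mono_on integrable_gaussian_density.integrableOn
          (integrableOn_const measure_Ioc_lt_top.ne) measurableSet_Ioc fun t ht =>
            mul_le_mul_of_nonneg_left (hK t (Ioc_subset_Icc_self ht)) (by positivity)
    _ = (b - a) * ((√(2 * π))⁻¹ * K) := by
        rw [setIntegral_const, volume_real_Ioc_of_le hab, smul_eq_mul]

lemma Phi_neg_add_sub_Phi_neg_le {m δ : ℝ} (hδ0 : 0 ≤ δ) (hδm : δ ≤ m / 2) :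
    Phi (-m + δ) - Phi (-m) ≤ δ * exp (-m ^ 2 / 8) / √(2 * π) := by
  have hK : ∀ t ∈ Icc (-m) (-m + δ), exp (-t ^ 2 / 2) ≤ exp (-m ^ 2 / 8) := fun t ht => by
    rw [exp_le_exp]
    nlinarith [ht.1, ht.2]
  calc Phi (-m + δ) - Phi (-m) ≤ (-m + δ - -m) * ((√(2 * π))⁻¹ * exp (-m ^ 2 / 8)) :=
        Phi_sub_Phi_le_of_exp_le (by linarith) hK
    _ = δ * exp (-m ^ 2 / 8) / √(2 * π) := by ring

section QuadraticForm

variable {n : Type*} [Fintype n] {M : Matrix n n ℝ}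

lemma Matrix.IsHermitian.dotProduct_mulVec_comm (hM : M.IsHermitian) (x y : n → ℝ) :
    x ⬝ᵥ M *ᵥ y = y ⬝ᵥ M *ᵥ x := by
  have hMt : Mᵀ = M := by rw [← conjTranspose_eq_transpose_of_trivial]; exact hM
  rw [dotProduct_mulVec, ← mulVec_transpose, hMt, dotProduct_comm]

lemma Matrix.IsHermitian.dotProduct_mulVec_sub_smul (hM : M.IsHermitian) (x y : n → ℝ) (c : ℝ) :
    x ⬝ᵥ M *ᵥ (x - c • y) = x ⬝ᵥ M *ᵥ x - c * (y ⬝ᵥ M *ᵥ x) := by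
  rw [mulVec_sub, mulVec_smul, dotProduct_sub, dotProduct_smul, smul_eq_mul,
    hM.dotProduct_mulVec_comm x y]

lemma Matrix.IsHermitian.sub_smul_dotProduct_mulVec_sub_smul (hM : M.IsHermitian)
    (x y : n → ℝ) (c : ℝ) :
    (x - c • y) ⬝ᵥ M *ᵥ (x - c • y)
      = x ⬝ᵥ M *ᵥ x - 2 * c * (y ⬝ᵥ M *ᵥ x) + c ^ 2 * (y ⬝ᵥ M *ᵥ y) := by
  rw [sub_dotProduct, hM.dotProduct_mulVec_sub_smul, smul_dotProduct, smul_eq_mul,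
    mulVec_sub, mulVec_smul, dotProduct_sub, dotProduct_smul, smul_eq_mul]
  ring

lemma Matrix.PosSemidef.dotProduct_mulVec_self_nonneg (hM : M.PosSemidef) (x : n → ℝ) :
    0 ≤ x ⬝ᵥ M *ᵥ x := by
  simpa using hM.dotProduct_mulVec_nonneg x

lemma Matrix.PosSemidef.dotProduct_mulVec_sq_le (hM : M.PosSemidef) (x y : n → ℝ) :
    (x ⬝ᵥ M *ᵥ y) ^ 2 ≤ (x ⬝ᵥ M *ᵥ x) * (y ⬝ᵥ M *ᵥ y) := by
  have hq : ∀ t : ℝ,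
      0 ≤ (y ⬝ᵥ M *ᵥ y) * (t * t) + (2 * (x ⬝ᵥ M *ᵥ y)) * t + (x ⬝ᵥ M *ᵥ x) := fun t => by
    have h := hM.dotProduct_mulVec_nonneg (x - (-t) • y)
    rw [star_trivial, hM.isHermitian.sub_smul_dotProduct_mulVec_sub_smul,
      hM.isHermitian.dotProduct_mulVec_comm y x] at h
    linarith
  have h := discrim_le_zero hq
  rw [discrim] at h
  linarith

lemma Matrix.PosSemidef.dotProduct_mulVec_self_pos_of_ne_zero (hM : M.PosSemidef)
    {x y : n → ℝ} (h : x ⬝ᵥ M *ᵥ y ≠ 0) : 0 < y ⬝ᵥ M *ᵥ y := by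
  have hCS := hM.dotProduct_mulVec_sq_le x y
  rcases (hM.dotProduct_mulVec_self_nonneg y).eq_or_lt with hy | hy
  · rw [← hy, mul_zero] at hCS
    exact absurd (pow_eq_zero_iff two_ne_zero |>.1 (le_antisymm hCS (sq_nonneg _))) h
  · exact hy

end QuadraticForm

lemma Real.sign_mul_self (x : ℝ) : Real.sign x * x = |x| := by
  rcases lt_trichotomy x 0 with hx | rfl | hx
  · rw [Real.sign_of_neg hx, abs_of_neg hx, neg_one_mul]
  · simp
  · rw [Real.sign_of_pos hx, abs_of_pos hx, one_mul]

lemma Real.abs_sign_le_one (x : ℝ) : |Real.sign x| ≤ 1 := by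
  rcases Real.sign_apply_eq x with h | h | h <;> norm_num [h]

section Holder

variable {n : Type*} [Fintype n]

lemma sign_dotProduct_self (w : n → ℝ) : (fun i => Real.sign (w i)) ⬝ᵥ w = ∑ i, |w i| :=
  Finset.sum_congr rfl fun i _ => Real.sign_mul_self (w i)

lemma dotProduct_le_sum_abs_of_abs_le_one {z : n → ℝ} (hz : ∀ i, |z i| ≤ 1) (w : n → ℝ) :
    z ⬝ᵥ w ≤ ∑ i, |w i| :=
  Finset.sum_le_sum fun i _ => calc
    z i * w i ≤ |z i| * |w i| := by rw [← abs_mul]; exact le_abs_self _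
    _ ≤ |w i| := mul_le_of_le_one_left (abs_nonneg _) (hz i)

lemma Matrix.PosSemidef.sq_sum_abs_mulVec_le {M : Matrix n n ℝ} (hM : M.PosSemidef)
    (μ : n → ℝ) :
    (∑ i, |(M *ᵥ μ) i|) ^ 2 ≤ ((fun i => Real.sign ((M *ᵥ μ) i)) ⬝ᵥ
      M *ᵥ fun i => Real.sign ((M *ᵥ μ) i)) * (μ ⬝ᵥ M *ᵥ μ) := by
  rw [← sign_dotProduct_self]
  exact hM.dotProduct_mulVec_sq_le _ μ

end Holder

lemma mul_le_sq_div_two_of_le_div {ε L m : ℝ} (hL : 0 ≤ L) (h : ε ≤ m ^ 2 / (2 * L)) :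
    ε * L ≤ m ^ 2 / 2 := by
  rcases hL.eq_or_lt with rfl | hL
  · rw [mul_zero]; positivity
  · rw [le_div_iff₀ (by positivity)] at h
    linarith

lemma sq_mul_le_sq_div_four_of_le_div_sqrt {ε C m : ℝ} (hε : 0 ≤ ε) (hC : 0 ≤ C)
    (h : C ≠ 0 → ε ≤ m / (2 * √C)) : ε ^ 2 * C ≤ m ^ 2 / 4 := by
  rcases hC.eq_or_lt with rfl | hC
  · rw [mul_zero]; positivity
  · have h := h hC.ne'
    rw [le_div_iff₀ (by positivity)] at h
    nlinarith [sq_sqrt hC.le, mul_nonneg hε (sqrt_nonneg C)]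

lemma sub_two_mul_div_mul_sqrt_le {m p q : ℝ} (hm : 0 < m) (hp : p ≤ m ^ 2 / 2)
    (hq0 : 0 ≤ q) (hq : q ≤ m ^ 2 / 4) :
    (m - 2 * q / m) * √((m ^ 2 - p) ^ 2 / m ^ 2 + q) ≤ m ^ 2 - p := by
  have hm2 : 0 < m ^ 2 := by positivity
  have hpoly : (m - 2 * q / m) ^ 2 * ((m ^ 2 - p) ^ 2 / m ^ 2 + q) ≤ (m ^ 2 - p) ^ 2 := by
    rw [show m - 2 * q / m = (m ^ 2 - 2 * q) / m by field_simp,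
      show (m ^ 2 - p) ^ 2 / m ^ 2 + q = ((m ^ 2 - p) ^ 2 + q * m ^ 2) / m ^ 2 by field_simp,
      div_pow, div_mul_div_comm, div_le_iff₀ (by positivity)]
    have h1 : m ^ 4 / 4 ≤ (m ^ 2 - p) ^ 2 := by nlinarith
    have h2 : 0 ≤ m ^ 2 - q := by nlinarith
    have h3 : 0 ≤ 3 * m ^ 2 - 4 * q := by nlinarith
    nlinarith [mul_nonneg (mul_nonneg hq0 h2) (sub_nonneg.2 h1),
      mul_nonneg (mul_nonneg (mul_nonneg hq0 h3) hm2.le) hm2.le]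
  have hB : 0 ≤ m - 2 * q / m := by
    rw [sub_nonneg, div_le_iff₀ hm]
    nlinarith
  calc (m - 2 * q / m) * √((m ^ 2 - p) ^ 2 / m ^ 2 + q)
      = √((m - 2 * q / m) ^ 2 * ((m ^ 2 - p) ^ 2 / m ^ 2 + q)) := by
        rw [sqrt_mul (sq_nonneg _), sqrt_sq hB]
    _ ≤ √((m ^ 2 - p) ^ 2) := sqrt_le_sqrt hpoly
    _ = m ^ 2 - p := sqrt_sq (by nlinarith)

lemma div_sqrt_le_neg_add_two_mul_div {m p q a f : ℝ} (hm : 0 < m) (hp : p ≤ m ^ 2 / 2)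
    (hq0 : 0 ≤ q) (hq : q ≤ m ^ 2 / 4) (ha : a ≤ -(m ^ 2 - p)) (hf0 : 0 < f) (hf : f ≤ (m ^ 2 - p) ^ 2 / m ^ 2 + q) :
    a / √f ≤ -m + 2 * q / m := by
  have hF : 0 < √((m ^ 2 - p) ^ 2 / m ^ 2 + q) := sqrt_pos.2 (hf0.trans_le hf)
  calc a / √f ≤ -(m ^ 2 - p) / √f := div_le_div_of_nonneg_right ha (sqrt_nonneg f)
    _ ≤ -(m ^ 2 - p) / √((m ^ 2 - p) ^ 2 / m ^ 2 + q) := by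
        rw [neg_div, neg_div, neg_le_neg_iff]
        exact div_le_div_of_nonneg_left (by nlinarith) (sqrt_pos.2 hf0) (sqrt_le_sqrt hf)
    _ ≤ -m + 2 * q / m := by
        rw [div_le_iff₀ hF]
        linarith [sub_two_mul_div_mul_sqrt_le hm hp hq0 hq]

theorem gap_upper_bound (d : ℕ) (S : Matrix (Fin d) (Fin d) ℝ) (hS : S.PosDef)
    (μ : Fin d → ℝ) (m C ε : ℝ)
    (hm : m = Real.sqrt (∑ i, μ i * S⁻¹.mulVec μ i)) (hm0 : 0 < m)
    (hC : C = (∑ i, Real.sign (S⁻¹.mulVec μ i)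
          * S⁻¹.mulVec (fun j => Real.sign (S⁻¹.mulVec μ j)) i)
        - (∑ i, |S⁻¹.mulVec μ i|) ^ 2 / m ^ 2)
    (hε0 : 0 ≤ ε) (hε1 : ε ≤ m ^ 2 / (2 * ∑ i, |S⁻¹.mulVec μ i|))
    (hε2 : C ≠ 0 → ε ≤ m / (2 * Real.sqrt C))
    (z : Fin d → ℝ) (hz : ∀ i, |z i| ≤ 1)
    (hmin : ∀ z' : Fin d → ℝ, (∀ i, |z' i| ≤ 1) →
        ∑ i, (μ i - ε * z i) * S⁻¹.mulVec (fun j => μ j - ε * z j) i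
          ≤ ∑ i, (μ i - ε * z' i) * S⁻¹.mulVec (fun j => μ j - ε * z' j) i)
    (G : ℝ)
    (hG : G = Phi ((-m ^ 2 + ε * ∑ i, z i * S⁻¹.mulVec μ i)
          / Real.sqrt (∑ i, (μ i - ε * z i) * S⁻¹.mulVec (fun j => μ j - ε * z j) i))
        - Phi (-m)) :
    G ≤ Phi (-m + 2 * C * ε ^ 2 / m) - Phi (-m) ∧
    Phi (-m + 2 * C * ε ^ 2 / m) - Phi (-m)
      ≤ 2 * Real.exp (-m ^ 2 / 8) * C * ε ^ 2 / (Real.sqrt (2 * Real.pi) * m) := by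
  have hM : S⁻¹.PosSemidef := hS.inv.posSemidef
  set w := S⁻¹ *ᵥ μ
  set L := ∑ i, |w i|
  set s : Fin d → ℝ := fun i => Real.sign (w i)
  replace hC : C = s ⬝ᵥ S⁻¹ *ᵥ s - L ^ 2 / m ^ 2 := hC
  have hm2 : m ^ 2 = μ ⬝ᵥ S⁻¹ *ᵥ μ := hm ▸ sq_sqrt (hM.dotProduct_mulVec_self_nonneg μ)
  have hC0 : 0 ≤ C := by
    rw [hC, sub_nonneg, div_le_iff₀ (by positivity), hm2]
    exact hM.sq_sum_abs_mulVec_le μ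
  have hεL : ε * L ≤ m ^ 2 / 2 :=
    mul_le_sq_div_two_of_le_div (Finset.sum_nonneg fun i _ => abs_nonneg _) hε1
  have hεC : ε ^ 2 * C ≤ m ^ 2 / 4 := sq_mul_le_sq_div_four_of_le_div_sqrt hε0 hC0 hε2
  have hnum : -m ^ 2 + ε * (z ⬝ᵥ w) ≤ -(m ^ 2 - ε * L) := by
    linarith [mul_le_mul_of_nonneg_left (dotProduct_le_sum_abs_of_abs_le_one hz w) hε0]
  have hf : (μ - ε • z) ⬝ᵥ S⁻¹ *ᵥ (μ - ε • z) ≤ (m ^ 2 - ε * L) ^ 2 / m ^ 2 + ε ^ 2 * C := by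
    refine (hmin s fun i => Real.abs_sign_le_one (w i)).trans_eq ?_
    change (μ - ε • s) ⬝ᵥ S⁻¹ *ᵥ (μ - ε • s) = _
    rw [hM.isHermitian.sub_smul_dotProduct_mulVec_sub_smul, ← hm2, sign_dotProduct_self, hC]
    field_simp
    ring
  have hf0 : 0 < (μ - ε • z) ⬝ᵥ S⁻¹ *ᵥ (μ - ε • z) := by
    refine hM.dotProduct_mulVec_self_pos_of_ne_zero (x := μ) ?_
    rw [hM.isHermitian.dotProduct_mulVec_sub_smul, ← hm2]
    nlinarith
  have harg := div_sqrt_le_neg_add_two_mul_div hm0 hεL (by positivity) hεC hnum hf0 hf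
  refine ⟨hG.trans_le (sub_le_sub_right (Phi_monotone (harg.trans_eq (by ring))) _), ?_⟩
  refine (Phi_neg_add_sub_Phi_neg_le (by positivity) ?_).trans_eq (by ring)
  rw [div_le_div_iff₀ hm0 two_pos]
  nlinarith
end
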